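/- Let n be a positive integer and let A, B, C, D be n×n positive definite complex matrices. Let f : (0,∞) → (0,∞) be an operator monotone function (monotone on positive definite matrices of every finite size) with f(1) = 1 which is submultiplicative, i.e. f(xy) ≤ f(x)f(y) for all x, y > 0, and let σ be the associated matrix mean. Then (A σ C) ⊗ (B σ D) ≥ (A ⊗ B) σ (C ⊗ D), where ⊗ denotes the Kronecker product. -/

import Mathlib

/-!
Diagonalise `X = U diag(λ) U*` and `Y = V diag(μ) V*`. Then `X ⊗ Y = (U ⊗ V) diag(λᵢ μⱼ) (U ⊗ V)*`,
so `f(X ⊗ Y)` and `f(X) ⊗ f(Y)` are diagonal in the same orthonormal basis, with entries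
`f(λᵢ μⱼ) ≤ f(λᵢ) f(μⱼ)`. For multiplicative `t ↦ t ^ r` this gives
`(A ⊗ B)^{±1/2} = A^{±1/2} ⊗ B^{±1/2}`, so both sides of the inequality are congruences by
`A^{1/2} ⊗ B^{1/2}`, of `f(X) ⊗ f(Y)` and of `f(X ⊗ Y)` respectively, where
`X = A^{-1/2} C A^{-1/2}` and `Y = B^{-1/2} D B^{-1/2}`.
-/

open scoped ComplexOrder

noncomputable section

/-- The real power `M ^ r` of a (positive definite) matrix, via the continuous functional
calculus. -/
noncomputable def mPow {n : Type} [Fintype n] [DecidableEq n]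
    (M : Matrix n n ℂ) (r : ℝ) : Matrix n n ℂ :=
  cfc (fun t : ℝ => t ^ r) M

/-- The matrix mean `A σ B = A^{1/2} f(A^{-1/2} B A^{-1/2}) A^{1/2}` associated with the
representing function `f`. -/
noncomputable def mMean {n : Type} [Fintype n] [DecidableEq n]
    (f : ℝ → ℝ) (A B : Matrix n n ℂ) : Matrix n n ℂ :=
  mPow A (1/2) * cfc f (mPow A (-(1/2)) * B * mPow A (-(1/2))) * mPow A (1/2)

/-- The weighted geometric mean `X #_α Y = X^{1/2} (X^{-1/2} Y X^{-1/2})^α X^{1/2}`. -/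
noncomputable def mGeoMean {n : Type} [Fintype n] [DecidableEq n]
    (α : ℝ) (A B : Matrix n n ℂ) : Matrix n n ℂ :=
  mMean (fun t : ℝ => t ^ α) A B

/-- `f : (0,∞) → (0,∞)` is operator monotone on positive definite complex matrices of every
finite size: `X ≤ Y` implies `f(X) ≤ f(Y)` (in the sense that the differences are positive
semidefinite). -/
def IsMatrixMonotone (f : ℝ → ℝ) : Prop :=
  ∀ (m : ℕ) (X Y : Matrix (Fin m) (Fin m) ℂ), X.PosDef → Y.PosDef →
    (Y - X).PosSemidef → (cfc f Y - cfc f X).PosSemidef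

open Matrix Polynomial Kronecker

section FunctionalCalculus

variable {m l : Type*} [Fintype m] [DecidableEq m] [Fintype l] [DecidableEq l]

omit [DecidableEq m] in
theorem exists_polynomial_eval_eq (d : m → ℝ) (f : ℝ → ℝ) :
    ∃ p : ℝ[X], ∀ i, p.eval (d i) = f (d i) :=
  ⟨Lagrange.interpolate (Finset.univ.image d) id f, fun i =>
    Lagrange.eval_interpolate_at_node f Function.injective_id.injOn
      (Finset.mem_image_of_mem d (Finset.mem_univ i))⟩

theorem aeval_diagonal_ofReal (d : m → ℝ) (p : ℝ[X]) :
    aeval (diagonal fun i => (d i : ℂ)) p = diagonal fun i => ((p.eval (d i) : ℝ) : ℂ) := by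
  have h := aeval_algHom_apply (diagonalAlgHom ℝ (n := m) (α := ℂ)) (fun i => (d i : ℂ)) p
  simp only [diagonalAlgHom_apply] at h
  rw [h, aeval_pi]
  congr 1
  funext i
  simp [← Complex.coe_algebraMap, aeval_algebraMap_apply]

theorem cfc_diagonal_ofReal (d : m → ℝ) (f : ℝ → ℝ) :
    cfc f (diagonal fun i => (d i : ℂ)) = diagonal fun i => (f (d i) : ℂ) := by
  obtain ⟨p, hp⟩ := exists_polynomial_eval_eq d f
  have hspec : spectrum ℝ (diagonal fun i => (d i : ℂ)) ⊆ Set.range d := by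
    intro x hx
    rw [← spectrum.algebraMap_mem_iff ℂ, spectrum_diagonal] at hx
    obtain ⟨i, hi⟩ := hx
    exact ⟨i, Complex.ofReal_inj.mp hi⟩
  have hD : (diagonal fun i => (d i : ℂ)).IsHermitian :=
    isHermitian_diagonal_iff.mpr fun i => Complex.conj_ofReal (d i)
  calc cfc f (diagonal fun i => (d i : ℂ))
      = cfc (fun x => p.eval x) (diagonal fun i => (d i : ℂ)) :=
        cfc_congr fun x hx => by obtain ⟨i, rfl⟩ := hspec hx; exact (hp i).symm
    _ = diagonal fun i => (f (d i) : ℂ) := by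
        rw [cfc_polynomial p _ hD.isSelfAdjoint, aeval_diagonal_ofReal]
        simp only [hp]

theorem cfc_unitary_conj (W : unitary (Matrix m m ℂ)) (f : ℝ → ℝ) {M : Matrix m m ℂ}
    (hM : M.IsHermitian) :
    cfc f ((W : Matrix m m ℂ) * M * star (W : Matrix m m ℂ))
      = W * cfc f M * star (W : Matrix m m ℂ) :=
  ((Unitary.conjStarAlgAut ℝ _ W).toStarAlgHom.map_cfc f M
    (M.finite_real_spectrum.continuousOn f) (by
      show Continuous fun x : Matrix m m ℂ => (W : Matrix m m ℂ) * x * star (W : Matrix m m ℂ)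
      fun_prop) hM.isSelfAdjoint).symm

theorem cfc_unitary_conj_diagonal (W : unitary (Matrix m m ℂ)) (d : m → ℝ) (f : ℝ → ℝ) :
    cfc f ((W : Matrix m m ℂ) * diagonal (fun i => (d i : ℂ)) * star (W : Matrix m m ℂ))
      = W * diagonal (fun i => (f (d i) : ℂ)) * star (W : Matrix m m ℂ) := by
  rw [cfc_unitary_conj W f (isHermitian_diagonal_iff.mpr fun i => Complex.conj_ofReal (d i)),
    cfc_diagonal_ofReal]

theorem Matrix.IsHermitian.cfc_eq_unitary_conj {A : Matrix m m ℂ} (hA : A.IsHermitian)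
    (f : ℝ → ℝ) :
    cfc f A = hA.eigenvectorUnitary * diagonal (fun i => (f (hA.eigenvalues i) : ℂ))
      * star (hA.eigenvectorUnitary : Matrix m m ℂ) :=
  hA.cfc_eq f

theorem kronecker_conj_diagonal {R : Type*} [CommSemiring R] [StarRing R]
    (U : Matrix m m R) (V : Matrix l l R) (a : m → R) (b : l → R) :
    (U * diagonal a * star U) ⊗ₖ (V * diagonal b * star V)
      = (U ⊗ₖ V) * diagonal (fun p => a p.1 * b p.2) * star (U ⊗ₖ V) := by
  rw [mul_kronecker_mul, mul_kronecker_mul, diagonal_kronecker_diagonal, star_eq_conjTranspose,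
    star_eq_conjTranspose, star_eq_conjTranspose, conjTranspose_kronecker]

theorem Matrix.IsHermitian.cfc_kronecker {X : Matrix m m ℂ} {Y : Matrix l l ℂ}
    (hX : X.IsHermitian) (hY : Y.IsHermitian) (f : ℝ → ℝ) :
    cfc f (X ⊗ₖ Y) = (hX.eigenvectorUnitary ⊗ₖ hY.eigenvectorUnitary : Matrix _ _ ℂ)
      * diagonal (fun p => (f (hX.eigenvalues p.1 * hY.eigenvalues p.2) : ℂ))
      * star (hX.eigenvectorUnitary ⊗ₖ hY.eigenvectorUnitary : Matrix _ _ ℂ) := by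
  have h := kronecker_conj_diagonal (hX.eigenvectorUnitary : Matrix m m ℂ)
    (hY.eigenvectorUnitary : Matrix l l ℂ) (fun i => (hX.eigenvalues i : ℂ))
    (fun j => (hY.eigenvalues j : ℂ))
  simp only [← Complex.ofReal_mul] at h
  conv_lhs => rw [hX.spectral_theorem, hY.spectral_theorem]
  exact (congrArg (cfc f) h).trans (cfc_unitary_conj_diagonal
    ⟨_, kronecker_mem_unitary hX.eigenvectorUnitary.2 hY.eigenvectorUnitary.2⟩ (fun p => _) f)

theorem Matrix.IsHermitian.kronecker_cfc {X : Matrix m m ℂ} {Y : Matrix l l ℂ}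
    (hX : X.IsHermitian) (hY : Y.IsHermitian) (g h : ℝ → ℝ) :
    cfc g X ⊗ₖ cfc h Y = (hX.eigenvectorUnitary ⊗ₖ hY.eigenvectorUnitary : Matrix _ _ ℂ)
      * diagonal (fun p => (g (hX.eigenvalues p.1) * h (hY.eigenvalues p.2) : ℂ))
      * star (hX.eigenvectorUnitary ⊗ₖ hY.eigenvectorUnitary : Matrix _ _ ℂ) := by
  rw [hX.cfc_eq_unitary_conj, hY.cfc_eq_unitary_conj, kronecker_conj_diagonal]

theorem Matrix.PosDef.posSemidef_kronecker_cfc_sub_cfc_kronecker {X : Matrix m m ℂ}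
    {Y : Matrix l l ℂ} (hX : X.PosDef) (hY : Y.PosDef) {f g h : ℝ → ℝ}
    (hfgh : ∀ x y : ℝ, 0 < x → 0 < y → f (x * y) ≤ g x * h y) :
    (cfc g X ⊗ₖ cfc h Y - cfc f (X ⊗ₖ Y)).PosSemidef := by
  rw [hX.1.kronecker_cfc hY.1, hX.1.cfc_kronecker hY.1, ← sub_mul, ← mul_sub, diagonal_sub]
  have hdiag : (diagonal fun p : m × l => (g (hX.1.eigenvalues p.1) * h (hY.1.eigenvalues p.2) : ℂ)
      - (f (hX.1.eigenvalues p.1 * hY.1.eigenvalues p.2) : ℂ)).PosSemidef := by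
    refine PosSemidef.diagonal fun p => ?_
    simp only [Pi.zero_apply]
    norm_cast
    exact sub_nonneg.mpr (hfgh _ _ (hX.eigenvalues_pos p.1) (hY.eigenvalues_pos p.2))
  simpa only [star_eq_conjTranspose] using hdiag.mul_mul_conjTranspose_same _

theorem Matrix.PosDef.cfc_kronecker_eq_kronecker_cfc {X : Matrix m m ℂ}
    {Y : Matrix l l ℂ} (hX : X.PosDef) (hY : Y.PosDef) {f g h : ℝ → ℝ}
    (hfgh : ∀ x y : ℝ, 0 < x → 0 < y → f (x * y) = g x * h y) :
    cfc f (X ⊗ₖ Y) = cfc g X ⊗ₖ cfc h Y := by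
  rw [hX.1.kronecker_cfc hY.1, hX.1.cfc_kronecker hY.1]
  congr
  funext p
  rw [hfgh _ _ (hX.eigenvalues_pos p.1) (hY.eigenvalues_pos p.2), Complex.ofReal_mul]

end FunctionalCalculus

section Means

variable {m l : Type} [Fintype m] [DecidableEq m] [Fintype l] [DecidableEq l]

theorem isHermitian_mPow (A : Matrix m m ℂ) (r : ℝ) : (mPow A r).IsHermitian :=
  cfc_predicate _ A

theorem posDef_mPow {A : Matrix m m ℂ} (hA : A.PosDef) (r : ℝ) : (mPow A r).PosDef := by
  rw [mPow, hA.1.cfc_eq_unitary_conj, Unitary.isUnit_coe.posDef_star_right_conjugate_iff,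
    posDef_diagonal_iff]
  exact fun i => by exact_mod_cast Real.rpow_pos_of_pos (hA.eigenvalues_pos i) r

theorem posDef_mPow_mul_mul_mPow {A C : Matrix m m ℂ} (hA : A.PosDef) (hC : C.PosDef)
    (r : ℝ) : (mPow A r * C * mPow A r).PosDef := by
  have h := (posDef_mPow hA r).isUnit.posDef_star_right_conjugate_iff.mpr hC
  rwa [star_eq_conjTranspose, (isHermitian_mPow A r).eq] at h

theorem mPow_kronecker {A : Matrix m m ℂ} {B : Matrix l l ℂ} (hA : A.PosDef) (hB : B.PosDef)
    (r : ℝ) : mPow (A ⊗ₖ B) r = mPow A r ⊗ₖ mPow B r :=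
  hA.cfc_kronecker_eq_kronecker_cfc hB fun _ _ hx hy => Real.mul_rpow hx.le hy.le

theorem kronecker_mMean (f : ℝ → ℝ) (A C : Matrix m m ℂ) (B D : Matrix l l ℂ) :
    mMean f A C ⊗ₖ mMean f B D
      = (mPow A (1/2) ⊗ₖ mPow B (1/2))
        * (cfc f (mPow A (-(1/2)) * C * mPow A (-(1/2)))
          ⊗ₖ cfc f (mPow B (-(1/2)) * D * mPow B (-(1/2))))
        * (mPow A (1/2) ⊗ₖ mPow B (1/2)) := by
  simp only [mMean, mul_kronecker_mul]

theorem mMean_kronecker (f : ℝ → ℝ) {A : Matrix m m ℂ} {B : Matrix l l ℂ} (hA : A.PosDef)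
    (hB : B.PosDef) (C : Matrix m m ℂ) (D : Matrix l l ℂ) :
    mMean f (A ⊗ₖ B) (C ⊗ₖ D)
      = (mPow A (1/2) ⊗ₖ mPow B (1/2))
        * cfc f ((mPow A (-(1/2)) * C * mPow A (-(1/2)))
          ⊗ₖ (mPow B (-(1/2)) * D * mPow B (-(1/2))))
        * (mPow A (1/2) ⊗ₖ mPow B (1/2)) := by
  simp only [mMean, mPow_kronecker hA hB, mul_kronecker_mul]

end Means

open Kronecker in
theorem stmt_15_general (n : ℕ) (A B C D : Matrix (Fin n) (Fin n) ℂ)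
    (hA : A.PosDef) (hB : B.PosDef) (hC : C.PosDef) (hD : D.PosDef)
    (f : ℝ → ℝ)
    (hf_sub : ∀ x y : ℝ, 0 < x → 0 < y → f (x * y) ≤ f x * f y) :
    ((mMean f A C) ⊗ₖ (mMean f B D) - mMean f (A ⊗ₖ B) (C ⊗ₖ D)).PosSemidef := by
  have key := (posDef_mPow_mul_mul_mPow hA hC (-(1/2))).posSemidef_kronecker_cfc_sub_cfc_kronecker
    (posDef_mPow_mul_mul_mPow hB hD (-(1/2))) hf_sub
  rw [kronecker_mMean, mMean_kronecker f hA hB, ← sub_mul, ← mul_sub]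
  simpa only [conjTranspose_kronecker, (isHermitian_mPow _ _).eq] using
    key.mul_mul_conjTranspose_same (mPow A (1/2) ⊗ₖ mPow B (1/2))

open Kronecker in
/-- **Tensor-product superadditivity of matrix means** (inequality (8) in the paper):
`(A σ C) ⊗ (B σ D) ≥ (A ⊗ B) σ (C ⊗ D)` for a submultiplicative representing function. -/
theorem stmt_15 (n : ℕ) (hn : 0 < n) (A B C D : Matrix (Fin n) (Fin n) ℂ)
    (hA : A.PosDef) (hB : B.PosDef) (hC : C.PosDef) (hD : D.PosDef)
    (f : ℝ → ℝ) (hf_pos : ∀ x : ℝ, 0 < x → 0 < f x) (hf_one : f 1 = 1)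
    (hf_mono : IsMatrixMonotone f)
    (hf_sub : ∀ x y : ℝ, 0 < x → 0 < y → f (x * y) ≤ f x * f y) :
    ((mMean f A C) ⊗ₖ (mMean f B D) - mMean f (A ⊗ₖ B) (C ⊗ₖ D)).PosSemidef :=
  stmt_15_general n A B C D hA hB hC hD f hf_sub
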